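/- arXiv:2408.14440 — 2 statements merged into one kernel-verified Lean document; each statement's English description precedes it below -/
import Mathlib

section
/- Suppose: (1) f is lower semicontinuous and nonnegative; (2) g is upper semicontinuous with inf_{ℝ^d} g ≤ 0; (3) for every s ≥ 0 there exists a nonempty compact set C_s such that inf { f(x) : s ≤ g(x) } = inf { f(x) : x ∈ {y : s ≤ g(y)} ∩ C_s }; (4) the zero set {x : f(x) = 0} is nonempty and contained in {x : g(x) = 0}. Then α_inf(0) = 0 and α_inf(s) > 0 for all s > 0. -/
/-!
The zero set of `f` lies in `{g = 0}`, so `α_inf(0) = 0` is attained there, while for `s > 0`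
the function `f` is positive on `{s ≤ g}`. By hypothesis the infimum over `{s ≤ g}` may be taken
over `{s ≤ g} ∩ C_s`, which is compact since `g` is upper semicontinuous; the lower
semicontinuous `f` attains a positive minimum there.
-/

theorem biInf_coe_eq_zero_of_nonneg {α : Type*} {f : α → ℝ} {S : Set α}
    (hf : ∀ x ∈ S, 0 ≤ f x) {x₀ : α} (hx₀ : x₀ ∈ S) (hfx₀ : f x₀ = 0) :
    ⨅ x ∈ S, (f x : EReal) = 0 :=
  le_antisymm ((biInf_le _ hx₀).trans_eq (by simp [hfx₀]))
    (le_iInf₂ fun x hx => EReal.coe_nonneg.2 (hf x hx))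

theorem IsCompact.biInf_coe_pos {X : Type*} [TopologicalSpace X] {f : X → ℝ} {K : Set X}
    (hK : IsCompact K) (hf : LowerSemicontinuousOn f K) (hpos : ∀ x ∈ K, 0 < f x) :
    0 < ⨅ x ∈ K, (f x : EReal) := by
  rcases K.eq_empty_or_nonempty with rfl | hne
  · simp
  obtain ⟨x₀, hx₀K, hmin⟩ := hf.exists_isMinOn hne hK
  calc (0 : EReal) < f x₀ := EReal.coe_pos.2 (hpos x₀ hx₀K)
    _ ≤ ⨅ x ∈ K, (f x : EReal) := le_iInf₂ fun x hx => EReal.coe_le_coe_iff.2 (hmin hx)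

theorem stmt_9_general {d : ℕ} (f g : EuclideanSpace ℝ (Fin d) → ℝ)
    (hf : LowerSemicontinuous f) (hfpos : ∀ x, 0 ≤ f x)
    (hg : UpperSemicontinuous g)
    (hC : ∀ s : ℝ, 0 ≤ s → ∃ C : Set (EuclideanSpace ℝ (Fin d)),
      C.Nonempty ∧ IsCompact C ∧
      (⨅ x ∈ {x | s ≤ g x}, (f x : EReal)) = ⨅ x ∈ {x | s ≤ g x} ∩ C, (f x : EReal))
    (hzero : {x | f x = 0}.Nonempty ∧ {x | f x = 0} ⊆ {x | g x = 0}) :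
    (⨅ x ∈ {x | (0 : ℝ) ≤ g x}, (f x : EReal)) = 0 ∧
      ∀ s : ℝ, 0 < s → 0 < ⨅ x ∈ {x | s ≤ g x}, (f x : EReal) := by
  obtain ⟨⟨x₀, hx₀⟩, hzero_sub⟩ := hzero
  refine ⟨biInf_coe_eq_zero_of_nonneg (fun x _ => hfpos x) (hzero_sub hx₀).symm.le hx₀,
    fun s hs => ?_⟩
  obtain ⟨C, -, hCc, hCeq⟩ := hC s hs.le
  rw [hCeq]
  refine (hCc.inter_left (hg.isClosed_preimage s)).biInf_coe_pos (hf.lowerSemicontinuousOn _)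
    fun x hx => (hfpos x).lt_of_ne fun hfx => ?_
  have hgx : g x = 0 := hzero_sub hfx.symm
  exact hs.not_ge (hgx ▸ hx.1)

theorem stmt_9 {d : ℕ} (f g : EuclideanSpace ℝ (Fin d) → ℝ)
    (hf : LowerSemicontinuous f) (hfpos : ∀ x, 0 ≤ f x)
    (hg : UpperSemicontinuous g) (hginf : (⨅ x, (g x : EReal)) ≤ 0)
    (hC : ∀ s : ℝ, 0 ≤ s → ∃ C : Set (EuclideanSpace ℝ (Fin d)),
      C.Nonempty ∧ IsCompact C ∧
      (⨅ x ∈ {x | s ≤ g x}, (f x : EReal)) = ⨅ x ∈ {x | s ≤ g x} ∩ C, (f x : EReal))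
    (hzero : {x | f x = 0}.Nonempty ∧ {x | f x = 0} ⊆ {x | g x = 0}) :
    (⨅ x ∈ {x | (0 : ℝ) ≤ g x}, (f x : EReal)) = 0 ∧
      ∀ s : ℝ, 0 < s → 0 < ⨅ x ∈ {x | s ≤ g x}, (f x : EReal) :=
  stmt_9_general f g hf hfpos hg hC hzero
end

section
/- Let g : ℝ^d → ℝ be upper semicontinuous such that either sup_{ℝ^d} g = +∞ or the supremum of g is attained. Suppose f : ℝ^d → ℝ is lower semicontinuous and there is a compact-valued set-valued map C : ℝ → 𝒫(ℝ^d) such that for all s > inf_{ℝ^d} g and all real t with s ≤ t ≤ sup_{ℝ^d} g, one has inf { f(x) : s ≤ g(x) } = inf { f(x) : x ∈ {y : s ≤ g(y)} ∩ C(t) }. Then α_inf(s) = inf { f(x) : s ≤ g(x) } is lower semicontinuous on ℝ (as an extended-real-valued function, with inf over the empty set equal to +∞). -/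
/-!
The value function `α s = inf {f x | s ≤ g x}` is monotone in `s`, so lower semicontinuity at `s`
only has to be checked from the left. For `s ≤ inf g` the constraint is void and `α` is constant
on `(-∞, s]`; for `s > sup g` it is infeasible and `α = ⊤` just left of `s`. In between, `α` agrees
near `s` with the infimum over the compact set `C s`. For `c < α s` the sets
`{t ≤ g} ∩ {f ≤ c} ∩ C s`, `t < s`, form a directed family of closed subsets of a compact set
(semicontinuity of `f` and `g`) whose intersection `{s ≤ g} ∩ {f ≤ c} ∩ C s` is empty, so one
of them is already empty, i.e. `c ≤ α t`.
-/

open Set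

theorem Monotone.lowerSemicontinuous_of_exists_lt {α β : Type*} [TopologicalSpace α]
    [LinearOrder α] [OrderTopology α] [Preorder β] {φ : α → β} (hφ : Monotone φ)
    (h : ∀ s y, y < φ s → ∃ t < s, y < φ t) : LowerSemicontinuous φ := by
  intro s y hy
  obtain ⟨t, hts, hyt⟩ := h s y hy
  filter_upwards [Ioi_mem_nhds hts] with u hu
  exact hyt.trans_le (hφ hu.le)

section Superlevel

variable {X : Type*} {f g : X → ℝ}

theorem monotone_iInf_superlevel (f g : X → ℝ) (K : Set X) :
    Monotone fun s : ℝ => ⨅ x ∈ {x | s ≤ g x} ∩ K, (f x : EReal) :=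
  fun _ _ hst => biInf_mono fun _ hx => ⟨hst.trans hx.1, hx.2⟩

theorem iInf_superlevel_eq_of_le_iInf {s : ℝ} (hs : (s : EReal) ≤ ⨅ x, (g x : EReal)) :
    ⨅ x ∈ {x | s ≤ g x}, (f x : EReal) = ⨅ x, (f x : EReal) := by
  have huniv : {x | s ≤ g x} = univ :=
    eq_univ_of_forall fun x => EReal.coe_le_coe_iff.1 (hs.trans (iInf_le _ x))
  rw [huniv, iInf_univ]

theorem iInf_superlevel_eq_top_of_iSup_lt {s : ℝ} (hs : ⨆ x, (g x : EReal) < s) :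
    ⨅ x ∈ {x | s ≤ g x}, (f x : EReal) = ⊤ := by
  have hempty : {x | s ≤ g x} = ∅ :=
    eq_empty_of_forall_notMem fun x hx =>
      (le_iSup (fun x => (g x : EReal)) x).not_gt (hs.trans_le (EReal.coe_le_coe_iff.2 hx))
  rw [hempty, iInf_emptyset]

theorem IsCompact.exists_lt_iInf_superlevel [TopologicalSpace X] {K : Set X} (hK : IsCompact K)
    (hf : LowerSemicontinuous f) (hg : UpperSemicontinuous g) {s : ℝ} {y : EReal}
    (hy : y < ⨅ x ∈ {x | s ≤ g x} ∩ K, (f x : EReal)) :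
    ∃ t < s, y < ⨅ x ∈ {x | t ≤ g x} ∩ K, (f x : EReal) := by
  obtain ⟨c, hyc, hc⟩ := EReal.lt_iff_exists_real_btwn.1 hy
  let T : Iio s → Set X := fun t => g ⁻¹' Ici (t : ℝ) ∩ f ⁻¹' Iic c
  have hT_closed : ∀ t, IsClosed (T t) :=
    fun t => (hg.isClosed_preimage _).inter (hf.isClosed_preimage c)
  have hT_directed : Directed (· ⊇ ·) T :=
    Antitone.directed_ge fun _ _ htt' _ hx => ⟨le_trans (α := ℝ) htt' hx.1, hx.2⟩
  have hT_inter : K ∩ ⋂ t, T t = ∅ := by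
    refine eq_empty_of_forall_notMem fun x ⟨hxK, hxT⟩ => ?_
    rw [mem_iInter] at hxT
    have hsx : s ≤ g x := le_of_forall_lt_imp_le_of_dense fun t ht => (hxT ⟨t, ht⟩).1
    have hfx : (c : EReal) < f x := hc.trans_le (biInf_le _ ⟨hsx, hxK⟩)
    exact hfx.not_ge (EReal.coe_le_coe_iff.2 (hxT ⟨s - 1, by simp⟩).2)
  obtain ⟨⟨t, hts⟩, ht⟩ := hK.elim_directed_family_closed T hT_closed hT_inter hT_directed
  refine ⟨t, hts, hyc.trans_le (le_iInf₂ fun x hx => ?_)⟩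
  have hfx : c < f x := not_le.1 fun hfx => ht.subset ⟨hx.2, hx.1, hfx⟩
  exact EReal.coe_le_coe_iff.2 hfx.le

end Superlevel

theorem stmt_18_general {d : ℕ} (f g : EuclideanSpace ℝ (Fin d) → ℝ)
    (hg : UpperSemicontinuous g)
    (hf : LowerSemicontinuous f)
    (C : ℝ → Set (EuclideanSpace ℝ (Fin d))) (hC : ∀ t, IsCompact (C t))
    (hCeq : ∀ s t : ℝ, (⨅ x, (g x : EReal)) < (s : EReal) → s ≤ t →
      (t : EReal) ≤ (⨆ x, (g x : EReal)) →
      (⨅ x ∈ {x | s ≤ g x}, (f x : EReal)) =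
        ⨅ x ∈ {y | s ≤ g y} ∩ C t, (f x : EReal)) :
    LowerSemicontinuous (fun s : ℝ => ⨅ x ∈ {x | s ≤ g x}, (f x : EReal)) := by
  have hmono : Monotone fun s : ℝ => ⨅ x ∈ {x | s ≤ g x}, (f x : EReal) := by
    simpa only [inter_univ] using monotone_iInf_superlevel f g univ
  refine hmono.lowerSemicontinuous_of_exists_lt fun s y hy => ?_
  rcases le_or_gt (s : EReal) (⨅ x, (g x : EReal)) with hinf | hinf
  · refine ⟨s - 1, by linarith, ?_⟩
    have hinf' : ((s - 1 : ℝ) : EReal) ≤ ⨅ x, (g x : EReal) :=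
      (EReal.coe_le_coe_iff.2 (by linarith)).trans hinf
    rwa [iInf_superlevel_eq_of_le_iInf hinf', ← iInf_superlevel_eq_of_le_iInf hinf]
  rcases le_or_gt (s : EReal) (⨆ x, (g x : EReal)) with hsup | hsup
  · obtain ⟨ℓ, hℓ, hℓs⟩ := EReal.lt_iff_exists_real_btwn.1 hinf
    rw [hCeq s s hinf le_rfl hsup] at hy
    obtain ⟨t, hts, hyt⟩ := (hC s).exists_lt_iInf_superlevel hf hg hy
    have hℓs : ℓ < s := EReal.coe_lt_coe_iff.1 hℓs
    refine ⟨max t ℓ, max_lt hts hℓs, ?_⟩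
    have hinf_max : (⨅ x, (g x : EReal)) < (max t ℓ : ℝ) :=
      hℓ.trans_le (EReal.coe_le_coe_iff.2 (le_max_right t ℓ))
    rw [hCeq (max t ℓ) s hinf_max (max_lt hts hℓs).le hsup]
    exact hyt.trans_le (monotone_iInf_superlevel f g (C s) (le_max_left t ℓ))
  · obtain ⟨z, hz, hzs⟩ := EReal.lt_iff_exists_real_btwn.1 hsup
    refine ⟨z, EReal.coe_lt_coe_iff.1 hzs, ?_⟩
    rw [iInf_superlevel_eq_top_of_iSup_lt hz]
    exact hy.trans_le le_top

theorem stmt_18 {d : ℕ} (f g : EuclideanSpace ℝ (Fin d) → ℝ)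
    (hg : UpperSemicontinuous g)
    (hgsup : (⨆ x, (g x : EReal)) = ⊤ ∨ ∃ x, ∀ y, g y ≤ g x)
    (hf : LowerSemicontinuous f)
    (C : ℝ → Set (EuclideanSpace ℝ (Fin d))) (hC : ∀ t, IsCompact (C t))
    (hCeq : ∀ s t : ℝ, (⨅ x, (g x : EReal)) < (s : EReal) → s ≤ t →
      (t : EReal) ≤ (⨆ x, (g x : EReal)) →
      (⨅ x ∈ {x | s ≤ g x}, (f x : EReal)) =
        ⨅ x ∈ {y | s ≤ g y} ∩ C t, (f x : EReal)) :
    LowerSemicontinuous (fun s : ℝ => ⨅ x ∈ {x | s ≤ g x}, (f x : EReal)) :=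
  stmt_18_general f g hg hf C hC hCeq
end
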